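/- For every n ≥ 1, the word of values T(L_{2n}), T(L_{2n}+1), …, T(L_{2n+1}) (i.e. T(Λ_{2n})) equals the letter-by-letter image under λ of the word τ^n(1), where τ^n(1) denotes the n-fold application of the morphism τ to the one-letter word 1. -/

import Mathlib

/-- The golden mean φ = (1+√5)/2. -/
noncomputable def phi : ℝ := (1 + Real.sqrt 5) / 2

/-- `d : ℤ → ℕ` is a base-phi expansion of `N`: finitely supported, digits at most 1,
no two consecutive digits equal 1, and `∑ d i * φ^i = N`. -/
def IsBasePhi (N : ℕ) (d : ℤ → ℕ) : Prop :=
  {i : ℤ | d i ≠ 0}.Finite ∧ (∀ i, d i ≤ 1) ∧ (∀ i, d i * d (i + 1) = 0) ∧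
    ∑' i : ℤ, (d i : ℝ) * phi ^ i = (N : ℝ)

/-- The Lucas numbers: L 0 = 2, L 1 = 1, L (n+2) = L (n+1) + L n. -/
def Lucas : ℕ → ℕ
  | 0 => 2
  | 1 => 1
  | n + 2 => Lucas (n + 1) + Lucas n

/-- The sum of the digits of a (finitely supported) digit function. -/
noncomputable def digitSum (d : ℤ → ℕ) : ℕ := ∑' i : ℤ, d i

/-- The word `T(K) T(K+1) … T(M)` of values of `T` on the interval `[a, b]`. -/
def Tword (T : ℕ → ℕ) (a b : ℕ) : List ℕ := (List.range (b + 1 - a)).map fun j => T (a + j)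

/-- The morphism τ on the alphabet {1,…,8}. -/
def tau : ℕ → List ℕ
  | 1 => [1, 2]
  | 2 => [3, 1, 2]
  | 3 => [4, 7]
  | 4 => [8, 3, 1, 2]
  | 5 => [5, 6]
  | 6 => [7, 5, 6]
  | 7 => [8, 3]
  | 8 => [4, 7, 5, 6]
  | _ => []

/-- τ applied to a word, letter by letter. -/
def tauWord (w : List ℕ) : List ℕ := w.flatMap tau

/-- The letter-to-letter map λ with λ(1)=λ(3)=λ(6)=λ(8)=0 and λ(2)=λ(4)=λ(5)=λ(7)=1. -/
def lam : ℕ → ℕ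
  | 2 => 1
  | 4 => 1
  | 5 => 1
  | 7 => 1
  | _ => 0

noncomputable def psi : ℝ := (1 - Real.sqrt 5) / 2

lemma sqrt5_sq : Real.sqrt 5 * Real.sqrt 5 = 5 := by
  exact Real.mul_self_sqrt (by norm_num)

lemma phi_add_psi : phi + psi = 1 := by unfold phi psi; ring

lemma phi_mul_psi : phi * psi = -1 := by
  unfold phi psi; field_simp; nlinarith [sqrt5_sq]

lemma phi_sq : phi ^ 2 = phi + 1 := by
  have h := phi_mul_psi
  have h2 := phi_add_psi
  nlinarith [h, h2]

lemma psi_sq : psi ^ 2 = psi + 1 := by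
  have h := phi_mul_psi
  have h2 := phi_add_psi
  nlinarith [h, h2]

lemma phi_pos : 0 < phi := by
  unfold phi
  have : 0 ≤ Real.sqrt 5 := Real.sqrt_nonneg 5
  linarith

lemma phi_ne_zero : phi ≠ 0 := ne_of_gt phi_pos

lemma lucas_real : ∀ k : ℕ, phi ^ k + psi ^ k = (Lucas k : ℝ) := by
  have key : ∀ k : ℕ, phi ^ k + psi ^ k = (Lucas k : ℝ) ∧
      phi ^ (k+1) + psi ^ (k+1) = (Lucas (k+1) : ℝ) := by
    intro k
    induction k with
    | zero => constructor <;> norm_num [Lucas, phi_add_psi]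
    | succ n ih =>
      refine ⟨ih.2, ?_⟩
      have e1 : phi ^ (n+2) = phi ^ (n+1) + phi ^ n := by
        have : phi ^ (n+2) = phi ^ n * phi ^ 2 := by ring
        rw [this, phi_sq]; ring
      have e2 : psi ^ (n+2) = psi ^ (n+1) + psi ^ n := by
        have : psi ^ (n+2) = psi ^ n * psi ^ 2 := by ring
        rw [this, psi_sq]; ring
      have : Lucas (n+2) = Lucas (n+1) + Lucas n := rfl
      rw [e1, e2, this]
      push_cast
      linarith [ih.1, ih.2]
  exact fun k => (key k).1

lemma phi_inv : phi⁻¹ = -psi := by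
  have h : phi * (-psi) = 1 := by have := phi_mul_psi; linarith
  exact inv_eq_of_mul_eq_one_right h

lemma phi_zpow_neg (k : ℕ) : phi ^ (-(k:ℤ)) = (-psi) ^ k := by
  rw [zpow_neg, zpow_natCast, ← inv_pow, phi_inv]

lemma phi_lucas_even (n : ℕ) : phi ^ ((2*n : ℕ) : ℤ) + phi ^ (-((2*n : ℕ) : ℤ)) = (Lucas (2*n) : ℝ) := by
  rw [zpow_natCast, phi_zpow_neg]
  rw [Even.neg_pow ⟨n, by ring⟩]; exact lucas_real (2*n)

lemma phi_lucas_odd (n : ℕ) : phi ^ ((2*n+1 : ℕ) : ℤ) - phi ^ (-((2*n+1 : ℕ) : ℤ)) = (Lucas (2*n+1) : ℝ) := by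
  rw [zpow_natCast, phi_zpow_neg]
  rw [Odd.neg_pow ⟨n, by ring⟩]
  have := lucas_real (2*n+1)
  linarith

lemma phi_step (x : ℤ) : phi ^ x = phi ^ (x-1) + phi ^ (x-2) := by
  have h1 : phi ^ x = phi ^ (x-2) * phi ^ (2:ℤ) := by
    rw [← zpow_add₀ phi_ne_zero]; ring_nf
  rw [h1]
  have : phi ^ (2:ℤ) = phi + 1 := by
    rw [show (2:ℤ) = ((2:ℕ):ℤ) by norm_num, zpow_natCast, phi_sq]
  rw [this]
  have h2 : phi ^ (x-1) = phi ^ (x-2) * phi := by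
    rw [← zpow_add_one₀ phi_ne_zero]; ring_nf
  rw [h2]; ring

-- telescope: ∑_{i<t} phi^(b-1-2i) = phi^b - phi^(b-2t)
lemma phi_telescope (b : ℤ) : ∀ t : ℕ, ∑ i ∈ Finset.range t, phi ^ (b - 1 - 2*(i:ℤ)) = phi ^ b - phi ^ (b - 2*(t:ℤ)) := by
  intro t
  induction t with
  | zero => simp
  | succ t ih =>
    rw [Finset.sum_range_succ, ih]
    have h := phi_step (b - 2*(t:ℤ))
    push_cast
    have e1 : b - 2*(t:ℤ) - 1 = b - 1 - 2*(t:ℤ) := by ring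
    have e2 : b - 2*(t:ℤ) - 2 = b - 2*((t:ℤ)+1) := by ring
    rw [e1, e2] at h
    linarith

-- Lucas nat lemmas
lemma lucas_pos : ∀ k, 1 ≤ Lucas k := by
  have key : ∀ k, 1 ≤ Lucas k ∧ 1 ≤ Lucas (k+1) := by
    intro k
    induction k with
    | zero => exact ⟨by norm_num [Lucas], by norm_num [Lucas]⟩
    | succ n ih =>
      refine ⟨ih.2, ?_⟩
      show 1 ≤ Lucas (n+2)
      have h : Lucas (n+2) = Lucas (n+1) + Lucas n := rfl
      omega
  exact fun k => (key k).1

lemma lucas_add (k : ℕ) : Lucas (k+2) = Lucas (k+1) + Lucas k := rfl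

lemma lucas_strictMono : ∀ a b, 1 ≤ a → a < b → Lucas a < Lucas b := by
  have step : ∀ a, 1 ≤ a → Lucas a < Lucas (a+1) := by
    intro a ha
    match a, ha with
    | 1, _ => norm_num [Lucas]
    | (n+2), _ =>
      show Lucas (n+2) < Lucas (n+3)
      have h1 := lucas_pos (n+1)
      have h2 : Lucas (n+3) = Lucas (n+2) + Lucas (n+1) := rfl
      omega
  intro a b ha hab
  induction b with
  | zero => omega
  | succ n ih =>
    rcases Nat.lt_or_ge a n with h | h
    · have h1 := ih (by omega)
      have h2 := step n (by omega)
      omega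
    · have : a = n := by omega
      subst this
      exact step a ha

lemma le_lucas : ∀ k, k ≤ Lucas k := by
  have key : ∀ k, k ≤ Lucas k ∧ k+1 ≤ Lucas (k+1) := by
    intro k
    induction k with
    | zero => norm_num [Lucas]
    | succ n ih =>
      refine ⟨ih.2, ?_⟩
      show n+2 ≤ Lucas (n+2)
      have h1 : Lucas (n+2) = Lucas (n+1) + Lucas n := rfl
      have h2 := lucas_pos n
      omega
  exact fun k => (key k).1
-- appended to part1
def evensF (n : ℕ) : Finset ℤ := (Finset.range (2*n+1)).image (fun i : ℕ => 2*(n:ℤ) - 2*(i:ℤ))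

def tailF (k : ℕ) (b : ℤ) : Finset ℤ :=
  (Finset.range ((b + 2*k)/2).toNat).image (fun i : ℕ => b - 1 - 2*(i:ℤ))

def idx (N : ℕ) : ℕ := Nat.findGreatest (fun k => Lucas (2*k) ≤ N) N

def Eaux : ℕ → ℕ → Finset ℤ
  | 0, _ => ∅
  | (f+1), N =>
    if N = 0 then ∅ else if N = 1 then {0} else if N = 2 then {1, -2} else
    let n := idx N
    if N < Lucas (2*n+1) then
      insert (2*(n:ℤ)) (insert (-(2*(n:ℤ))) (Eaux f (N - Lucas (2*n))))
    else if N = Lucas (2*n+1) then evensF n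
    else
      let S := Eaux f (N - Lucas (2*n+1))
      let b := S.min.untopD 0
      insert (2*(n:ℤ)+1) (insert (-(2*(n:ℤ)+2)) (S.erase b ∪ tailF n b))

def E (N : ℕ) : Finset ℤ := Eaux N N

lemma idx_eq (n : ℕ) (N : ℕ) (h1 : Lucas (2*n) ≤ N) (h2 : N < Lucas (2*n+2)) : idx N = n := by
  have hnN : n ≤ N := le_trans (le_trans (by omega : n ≤ 2*n) (le_lucas (2*n))) h1
  unfold idx
  rcases Nat.eq_zero_or_pos n with hn | hn
  · subst hn
    rw [Nat.findGreatest_eq_zero_iff]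
    intro k hk hkN hL
    have : Lucas 2 ≤ Lucas (2*k) := by
      rcases Nat.eq_or_lt_of_le (by omega : 1 ≤ k) with h | h
      · rw [show 2*k = 2 by omega]
      · exact le_of_lt (lucas_strictMono 2 (2*k) (by omega) (by omega))
    simp only [Lucas] at this h2 ⊢
    omega
  · rw [Nat.findGreatest_eq_iff]
    refine ⟨hnN, fun _ => h1, fun k hk hkN => ?_⟩
    simp only [not_le]
    calc N < Lucas (2*n+2) := h2
    _ ≤ Lucas (2*k) := by
      rcases Nat.eq_or_lt_of_le (by omega : n+1 ≤ k) with h | h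
      · rw [show 2*k = 2*n+2 by omega]
      · exact le_of_lt (lucas_strictMono (2*n+2) (2*k) (by omega) (by omega))

lemma Eaux_fuel : ∀ N f f', N ≤ f → N ≤ f' → Eaux f N = Eaux f' N := by
  intro N
  induction N using Nat.strong_induction_on with
  | _ N ih =>
    intro f f' hf hf'
    match f, f' with
    | 0, 0 => rfl
    | 0, _+1 => interval_cases N; rfl
    | _+1, 0 => interval_cases N; rfl
    | g+1, g'+1 =>
      show Eaux (g+1) N = Eaux (g'+1) N
      rw [Eaux, Eaux]
      rcases Nat.lt_or_ge N 3 with h3 | h3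
      · interval_cases N <;> rfl
      · simp only [if_neg (by omega : ¬ N = 0), if_neg (by omega : ¬ N = 1), if_neg (by omega : ¬ N = 2)]
        have hL0 : 1 ≤ Lucas (2 * idx N) := lucas_pos _
        have hL1 : 1 ≤ Lucas (2 * idx N + 1) := lucas_pos _
        split
        · rw [ih (N - Lucas (2 * idx N)) (by omega) g g' (by omega) (by omega)]
        · split
          · rfl
          · rw [ih (N - Lucas (2 * idx N + 1)) (by omega) g g' (by omega) (by omega)]

lemma E_zero : E 0 = ∅ := rfl
lemma E_one : E 1 = {0} := rfl
lemma E_two : E 2 = {1, -2} := rfl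

lemma E_eq_fuel (N f : ℕ) (h : N ≤ f) : Eaux f N = E N := Eaux_fuel N f N h le_rfl

lemma lucas_two_le (k : ℕ) (hk : 2 ≤ k) : 3 ≤ Lucas k := by
  rcases Nat.eq_or_lt_of_le hk with h | h
  · rw [← h]; norm_num [show Lucas 2 = 3 from rfl]
  · exact le_of_lt (lucas_strictMono 2 k (by omega) h)

-- characterization lemmas; interval index n+1 (intervals Λ_{2n+2}, Λ_{2n+3})
lemma cEeven (n m : ℕ) (hm : m < Lucas (2*n+1)) :
    E (Lucas (2*n+2) + m) = insert (2*(n:ℤ)+2) (insert (-(2*(n:ℤ)+2)) (E m)) := by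
  have e1 : 2*(n+1) = 2*n+2 := by ring
  have e2 : 2*(n+1)+1 = 2*n+3 := by ring
  have e3 : 2*(n+1)+2 = 2*n+4 := by ring
  have hp1 := lucas_pos (2*n+1)
  have hp2 := lucas_pos (2*n+2)
  set N := Lucas (2*n+2) + m with hN
  have hL2 : Lucas (2*n+3) = Lucas (2*n+2) + Lucas (2*n+1) := lucas_add _
  have hL3 : Lucas (2*n+4) = Lucas (2*n+3) + Lucas (2*n+2) := lucas_add _
  have h1 : Lucas (2*(n+1)) ≤ N := by rw [e1]; omega
  have h2 : N < Lucas (2*(n+1)+2) := by rw [e3]; have := lucas_pos (2*n+2); omega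
  have hidx : idx N = n+1 := idx_eq (n+1) N h1 h2
  have hN3 : 3 ≤ N := by have := lucas_two_le (2*n+2) (by omega); omega
  have hE : E N = Eaux N N := rfl
  rw [hE, show N = (N-1)+1 by omega, Eaux]
  simp only [if_neg (by omega : ¬ (N-1)+1 = 0), if_neg (by omega : ¬ (N-1)+1 = 1),
    if_neg (by omega : ¬ (N-1)+1 = 2)]
  rw [show (N-1)+1 = N by omega, hidx]
  have hlt : N < Lucas (2*(n+1)+1) := by rw [e2]; omega
  rw [if_pos hlt]
  have hsub : N - Lucas (2*(n+1)) = m := by rw [e1]; omega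
  rw [hsub, E_eq_fuel m (N-1) (by omega)]
  rw [show ((((n:ℕ)+1 : ℕ)):ℤ) = (n:ℤ)+1 by push_cast; ring]
  rw [show (2*((n:ℤ)+1)) = 2*(n:ℤ)+2 by ring]

lemma cEend (n : ℕ) : E (Lucas (2*n+1)) = evensF n := by
  rcases Nat.eq_zero_or_pos n with h|h
  · subst h
    show E 1 = evensF 0
    rw [E_one]
    unfold evensF
    rfl
  · set N := Lucas (2*n+1) with hN
    have h1 : Lucas (2*n) ≤ N := le_of_lt (lucas_strictMono (2*n) (2*n+1) (by omega) (by omega))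
    have h2 : N < Lucas (2*n+2) := lucas_strictMono (2*n+1) (2*n+2) (by omega) (by omega)
    have hidx : idx N = n := idx_eq n N h1 h2
    have hN3 : 3 ≤ N := by have := lucas_two_le (2*n+1) (by omega); omega
    have hE : E N = Eaux N N := rfl
    rw [hE, show N = (N-1)+1 by omega, Eaux]
    simp only [if_neg (by omega : ¬ (N-1)+1 = 0), if_neg (by omega : ¬ (N-1)+1 = 1),
      if_neg (by omega : ¬ (N-1)+1 = 2)]
    rw [show (N-1)+1 = N by omega, hidx, if_neg (by omega), if_pos rfl]

lemma cEodd (n m : ℕ) (hm1 : 1 ≤ m) (hm : m < Lucas (2*n+2)) :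
    E (Lucas (2*n+3) + m) = insert (2*(n:ℤ)+3) (insert (-(2*(n:ℤ)+4))
      ((E m).erase ((E m).min.untopD 0) ∪ tailF (n+1) ((E m).min.untopD 0))) := by
  have e1 : 2*(n+1) = 2*n+2 := by ring
  have e2 : 2*(n+1)+1 = 2*n+3 := by ring
  have e3 : 2*(n+1)+2 = 2*n+4 := by ring
  have hp1 := lucas_pos (2*n+1)
  have hp2 := lucas_pos (2*n+2)
  have hp3 := lucas_pos (2*n+3)
  set N := Lucas (2*n+3) + m with hN
  have hL2 : Lucas (2*n+3) = Lucas (2*n+2) + Lucas (2*n+1) := lucas_add _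
  have hL3 : Lucas (2*n+4) = Lucas (2*n+3) + Lucas (2*n+2) := lucas_add _
  have h1 : Lucas (2*(n+1)) ≤ N := by rw [e1]; have := lucas_pos (2*n+1); omega
  have h2 : N < Lucas (2*(n+1)+2) := by rw [e3]; omega
  have hidx : idx N = n+1 := idx_eq (n+1) N h1 h2
  have hN3 : 3 ≤ N := by have := lucas_two_le (2*n+3) (by omega); omega
  have hE : E N = Eaux N N := rfl
  rw [hE, show N = (N-1)+1 by omega, Eaux]
  simp only [if_neg (by omega : ¬ (N-1)+1 = 0), if_neg (by omega : ¬ (N-1)+1 = 1),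
    if_neg (by omega : ¬ (N-1)+1 = 2)]
  rw [show (N-1)+1 = N by omega, hidx]
  rw [if_neg (by rw [e2]; omega), if_neg (by rw [e2]; omega)]
  have hsub : N - Lucas (2*(n+1)+1) = m := by rw [e2]; omega
  rw [hsub, E_eq_fuel m (N-1) (by omega)]
  rw [show ((((n:ℕ)+1 : ℕ)):ℤ) = (n:ℤ)+1 by push_cast; ring]
  rw [show (2*((n:ℤ)+1)+1) = 2*(n:ℤ)+3 by ring, show (-(2*((n:ℤ)+1)+2)) = -(2*(n:ℤ)+4) by ring]
-- tailF lemmas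
lemma mem_tailF {k : ℕ} {b j : ℤ} :
    j ∈ tailF k b ↔ ∃ i : ℕ, i < ((b + 2*(k:ℤ))/2).toNat ∧ j = b - 1 - 2*(i:ℤ) := by
  simp only [tailF, Finset.mem_image, Finset.mem_range]
  constructor
  · rintro ⟨i, hi, rfl⟩; exact ⟨i, hi, rfl⟩
  · rintro ⟨i, hi, rfl⟩; exact ⟨i, hi, rfl⟩

lemma tail_t {k : ℕ} {b : ℤ} (hb : Even b) (hl : -(2*(k:ℤ)) ≤ b) :
    ((((b + 2*(k:ℤ))/2).toNat : ℤ)) * 2 = b + 2*(k:ℤ) := by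
  obtain ⟨c, hc⟩ := hb
  have h1 : (b + 2*(k:ℤ))/2 = c + k := by omega
  rw [h1, Int.toNat_of_nonneg (by omega)]
  omega

lemma tailF_bounds {k : ℕ} {b j : ℤ} (hb : Even b) (hl : -(2*(k:ℤ)) ≤ b)
    (hj : j ∈ tailF k b) : -(2*(k:ℤ)) + 1 ≤ j ∧ j ≤ b - 1 := by
  obtain ⟨i, hi, rfl⟩ := mem_tailF.1 hj
  have ht := tail_t hb hl
  have : (i:ℤ) < (((b + 2*(k:ℤ))/2).toNat : ℤ) := by exact_mod_cast hi
  omega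

lemma card_tailF {k : ℕ} {b : ℤ} : (tailF k b).card = ((b + 2*(k:ℤ))/2).toNat := by
  rw [tailF, Finset.card_image_of_injective _ (fun a a' h => by omega), Finset.card_range]

lemma sum_tailF {k : ℕ} {b : ℤ} (hb : Even b) (hl : -(2*(k:ℤ)) ≤ b) :
    ∑ j ∈ tailF k b, phi ^ j = phi ^ b - phi ^ (-(2*(k:ℤ))) := by
  rw [tailF, Finset.sum_image (fun a _ a' _ h => by omega)]
  rw [phi_telescope b]
  have ht := tail_t hb hl
  congr 1
  congr 1
  omega

lemma gap_tailF {k : ℕ} {b j : ℤ} (h1 : j ∈ tailF k b) (h2 : j + 1 ∈ tailF k b) : False := by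
  obtain ⟨i, hi, he⟩ := mem_tailF.1 h1
  obtain ⟨i', hi', he'⟩ := mem_tailF.1 h2
  omega

-- evensF lemmas
lemma mem_evensF {k : ℕ} {a : ℤ} : a ∈ evensF k ↔ ∃ i : ℕ, i < 2*k+1 ∧ a = 2*(k:ℤ) - 2*(i:ℤ) := by
  simp only [evensF, Finset.mem_image, Finset.mem_range]
  constructor
  · rintro ⟨i, hi, rfl⟩; exact ⟨i, hi, rfl⟩
  · rintro ⟨i, hi, rfl⟩; exact ⟨i, hi, rfl⟩

lemma evensF_bounds {k : ℕ} {a : ℤ} (h : a ∈ evensF k) : -(2*(k:ℤ)) ≤ a ∧ a ≤ 2*(k:ℤ) := by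
  obtain ⟨i, hi, rfl⟩ := mem_evensF.1 h
  have : (i:ℤ) < 2*(k:ℤ)+1 := by exact_mod_cast hi
  omega

lemma evensF_succ (k : ℕ) :
    evensF (k+1) = insert (2*(k:ℤ)+2) (insert (-(2*(k:ℤ)+2)) (evensF k)) := by
  ext a
  simp only [Finset.mem_insert, mem_evensF]
  constructor
  · rintro ⟨i, hi, rfl⟩
    rcases Nat.eq_zero_or_pos i with h0 | h0
    · left; subst h0; push_cast; ring
    · rcases Nat.lt_or_ge i (2*k+2) with h2 | h2
      · right; right; exact ⟨i-1, by omega, by push_cast; omega⟩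
      · right; left; have : i = 2*k+2 := by omega
        subst this; push_cast; ring
  · rintro (rfl | rfl | ⟨i, hi, rfl⟩)
    · exact ⟨0, by omega, by push_cast; ring⟩
    · exact ⟨2*k+2, by omega, by push_cast; ring⟩
    · exact ⟨i+1, by omega, by push_cast; ring⟩

lemma card_evensF (k : ℕ) : (evensF k).card = 2*k+1 := by
  rw [evensF, Finset.card_image_of_injective _ (fun a a' h => by omega), Finset.card_range]

lemma sum_evensF : ∀ k, ∑ i ∈ evensF k, phi ^ i = (Lucas (2*k+1) : ℝ) := by
  intro k
  induction k with
  | zero =>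
    have : evensF 0 = {0} := rfl
    rw [this]
    simp [show Lucas 1 = 1 from rfl]
  | succ k ih =>
    rw [evensF_succ]
    have h1 : (2*(k:ℤ)+2) ∉ insert (-(2*(k:ℤ)+2)) (evensF k) := by
      simp only [Finset.mem_insert]
      push_neg
      refine ⟨by omega, fun h => ?_⟩
      have := evensF_bounds h
      omega
    have h2 : (-(2*(k:ℤ)+2)) ∉ evensF k := by
      intro h
      have := evensF_bounds h
      omega
    rw [Finset.sum_insert h1, Finset.sum_insert h2, ih]
    have he := phi_lucas_even (k+1)
    have hc1 : ((2*(k+1) : ℕ) : ℤ) = 2*(k:ℤ)+2 := by push_cast; ring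
    rw [hc1] at he
    have hL : Lucas (2*k+3) = Lucas (2*k+2) + Lucas (2*k+1) := lucas_add _
    have hcast : (Lucas (2*(k+1)+1) : ℝ) = (Lucas (2*k+2) : ℝ) + (Lucas (2*k+1) : ℝ) := by
      rw [show 2*(k+1)+1 = 2*k+3 by ring, hL]; push_cast; ring
    rw [hcast, show 2*(k+1) = 2*k+2 by ring] at *
    rw [show (-(2*(k:ℤ)+2)) = -(2*(k:ℤ)+2) from rfl]
    linarith

-- Frame
def Frame (S : Finset ℤ) (l h : ℤ) : Prop := l ∈ S ∧ ∀ i ∈ S, l ≤ i ∧ i ≤ h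

lemma frame_min {S : Finset ℤ} {l h : ℤ} (hf : Frame S l h) : S.min.untopD 0 = l := by
  have h1 : S.min ≤ (l : WithTop ℤ) := Finset.min_le hf.1
  have h2 : (l : WithTop ℤ) ≤ S.min := Finset.le_min (fun i hi => by
    exact_mod_cast (hf.2 i hi).1)
  have h3 : S.min = (l : WithTop ℤ) := le_antisymm h1 h2
  rw [h3]; rfl

def Good (N : ℕ) : Prop :=
  (∀ i ∈ E N, i + 1 ∉ E N) ∧
  ((∑ i ∈ E N, phi ^ i) = (N : ℝ)) ∧
  ((N = 1 ∧ E N = {0}) ∨ (N = 2 ∧ E N = ({1, -2} : Finset ℤ)) ∨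
   (∃ n : ℕ, Lucas (2*n+2) ≤ N ∧ N ≤ Lucas (2*n+3) ∧ Frame (E N) (-(2*(n:ℤ)+2)) (2*(n:ℤ)+2)) ∨
   (∃ n : ℕ, Lucas (2*n+3) < N ∧ N < Lucas (2*n+4) ∧ Frame (E N) (-(2*(n:ℤ)+4)) (2*(n:ℤ)+3)))

lemma interval_loc (N : ℕ) (h : 3 ≤ N) : ∃ n : ℕ, Lucas (2*n+2) ≤ N ∧ N < Lucas (2*n+4) := by
  classical
  set P := (fun k => Lucas (2*k) ≤ N) with hP
  have hP1 : P 1 := by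
    show Lucas 2 ≤ N
    simp only [show Lucas 2 = 3 from rfl]; omega
  have hspec : Lucas (2 * Nat.findGreatest P N) ≤ N :=
    Nat.findGreatest_spec (m := 1) (by omega) hP1
  have hpos : 1 ≤ Nat.findGreatest P N := Nat.le_findGreatest (by omega) hP1
  have hle : Nat.findGreatest P N ≤ N := Nat.findGreatest_le N
  have hlt : Nat.findGreatest P N < N := by
    rcases Nat.eq_or_lt_of_le hle with he | h'
    · exfalso
      have h2 := le_lucas (2 * Nat.findGreatest P N)
      omega
    · exact h'
  have hmax : ¬ Lucas (2 * (Nat.findGreatest P N + 1)) ≤ N :=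
    Nat.findGreatest_is_greatest (P := P) (n := N) (k := Nat.findGreatest P N + 1)
      (by omega) (by omega)
  refine ⟨Nat.findGreatest P N - 1, ?_, ?_⟩
  · rw [show 2*(Nat.findGreatest P N - 1)+2 = 2 * Nat.findGreatest P N by omega]
    exact hspec
  · rw [show 2*(Nat.findGreatest P N - 1)+4 = 2 * (Nat.findGreatest P N + 1) by omega]
    omega
lemma lucas_mono_le (a b : ℕ) (ha : 1 ≤ a) (hab : a ≤ b) : Lucas a ≤ Lucas b := by
  rcases Nat.eq_or_lt_of_le hab with h | h
  · rw [h]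
  · exact le_of_lt (lucas_strictMono a b ha h)

lemma E_bounds_odd (n m : ℕ) (hm1 : 1 ≤ m) (hm : m < Lucas (2*n+1)) (hg : Good m) :
    ∀ i ∈ E m, -(2*(n:ℤ)) ≤ i ∧ i ≤ 2*(n:ℤ) := by
  intro i hi
  rcases hg.2.2 with ⟨h1, hE⟩ | ⟨h2, hE⟩ | ⟨k, hk1, hk2, hf⟩ | ⟨k, hk1, hk2, hf⟩
  · rw [hE] at hi
    simp only [Finset.mem_singleton] at hi
    omega
  · have hn : 1 ≤ n := by
      by_contra hc
      have h0 : n = 0 := by omega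
      subst h0
      simp only [show Lucas 1 = 1 from rfl] at hm
      omega
    rw [hE] at hi
    simp only [Finset.mem_insert, Finset.mem_singleton] at hi
    rcases hi with rfl | rfl <;> omega
  · have hkn : 2*k+2 < 2*n+1 := by
      by_contra hc
      have := lucas_mono_le (2*n+1) (2*k+2) (by omega) (by omega)
      omega
    have := hf.2 i hi
    omega
  · have hkn : 2*k+3 < 2*n+1 := by
      by_contra hc
      have := lucas_mono_le (2*n+1) (2*k+3) (by omega) (by omega)
      omega
    have := hf.2 i hi
    omega

lemma E_bounds_even (n m : ℕ) (hm1 : 1 ≤ m) (hm : m < Lucas (2*n+2)) (hg : Good m) :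
    ∀ i ∈ E m, -(2*(n:ℤ)+2) ≤ i ∧ i ≤ 2*(n:ℤ)+1 := by
  intro i hi
  rcases hg.2.2 with ⟨h1, hE⟩ | ⟨h2, hE⟩ | ⟨k, hk1, hk2, hf⟩ | ⟨k, hk1, hk2, hf⟩
  · rw [hE] at hi
    simp only [Finset.mem_singleton] at hi
    omega
  · rw [hE] at hi
    simp only [Finset.mem_insert, Finset.mem_singleton] at hi
    rcases hi with rfl | rfl <;> omega
  · have hkn : 2*k+2 < 2*n+2 := by
      by_contra hc
      have := lucas_mono_le (2*n+2) (2*k+2) (by omega) (by omega)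
      omega
    have := hf.2 i hi
    omega
  · have hkn : 2*k+3 < 2*n+2 := by
      by_contra hc
      have := lucas_mono_le (2*n+2) (2*k+3) (by omega) (by omega)
      omega
    have := hf.2 i hi
    omega

lemma E_min_facts (m : ℕ) (hm1 : 1 ≤ m) (hg : Good m) :
    (E m).min.untopD 0 ∈ E m ∧ (∀ i ∈ E m, (E m).min.untopD 0 ≤ i) ∧
      Even ((E m).min.untopD 0) ∧ (E m).min.untopD 0 ≤ 0 := by
  rcases hg.2.2 with ⟨h1, hE⟩ | ⟨h2, hE⟩ | ⟨k, hk1, hk2, hf⟩ | ⟨k, hk1, hk2, hf⟩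
  · have hf : Frame (E m) 0 0 := by
      constructor
      · rw [hE]; simp
      · intro i hi; rw [hE] at hi; simp only [Finset.mem_singleton] at hi; omega
    rw [frame_min hf]
    exact ⟨hf.1, fun i hi => (hf.2 i hi).1, Even.zero, le_refl 0⟩
  · have hf : Frame (E m) (-2) 1 := by
      constructor
      · rw [hE]; simp
      · intro i hi; rw [hE] at hi
        simp only [Finset.mem_insert, Finset.mem_singleton] at hi
        rcases hi with rfl | rfl <;> omega
    rw [frame_min hf]
    exact ⟨hf.1, fun i hi => (hf.2 i hi).1, ⟨-1, by ring⟩, by omega⟩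
  · rw [frame_min hf]
    exact ⟨hf.1, fun i hi => (hf.2 i hi).1, ⟨-((k:ℤ)+1), by ring⟩, by omega⟩
  · rw [frame_min hf]
    exact ⟨hf.1, fun i hi => (hf.2 i hi).1, ⟨-((k:ℤ)+2), by ring⟩, by omega⟩

lemma good_one : Good 1 := by
  refine ⟨?_, ?_, Or.inl ⟨rfl, E_one⟩⟩
  · intro i hi
    rw [E_one] at hi ⊢
    simp only [Finset.mem_singleton] at hi ⊢
    omega
  · rw [E_one]
    simp

lemma good_two : Good 2 := by
  refine ⟨?_, ?_, Or.inr (Or.inl ⟨rfl, E_two⟩)⟩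
  · intro i hi
    rw [E_two] at hi ⊢
    simp only [Finset.mem_insert, Finset.mem_singleton] at hi ⊢
    omega
  · rw [E_two]
    rw [Finset.sum_insert (by simp)]
    simp only [Finset.sum_singleton]
    have h1 : phi ^ (1:ℤ) = phi := zpow_one phi
    have h2 : phi ^ (-2:ℤ) = psi + 1 := by
      rw [show (-2 : ℤ) = -((2:ℕ):ℤ) by norm_num, phi_zpow_neg]
      rw [Even.neg_pow ⟨1, by ring⟩, sq, ← sq, psi_sq]
    rw [h1, h2]
    have := phi_add_psi
    push_cast
    linarith

set_option maxHeartbeats 1000000 in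
theorem goodAll : ∀ N, 1 ≤ N → Good N := by
  intro N
  induction N using Nat.strong_induction_on with
  | _ N ih =>
  intro hN1
  rcases Nat.lt_or_ge N 3 with h3 | h3
  · interval_cases N
    · exact good_one
    · exact good_two
  · obtain ⟨n, hlo, hhi⟩ := interval_loc N h3
    have hL1 : Lucas (2*n+3) = Lucas (2*n+2) + Lucas (2*n+1) := lucas_add _
    have hL2 : Lucas (2*n+4) = Lucas (2*n+3) + Lucas (2*n+2) := lucas_add _
    have hp1 := lucas_pos (2*n+1)
    have hp2 := lucas_pos (2*n+2)
    rcases lt_trichotomy N (Lucas (2*n+3)) with hc | hc | hc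
    · -- even interval
      set m := N - Lucas (2*n+2) with hmdef
      have hmlt : m < Lucas (2*n+1) := by omega
      have hNe : N = Lucas (2*n+2) + m := by omega
      have hrw : E N = insert (2*(n:ℤ)+2) (insert (-(2*(n:ℤ)+2)) (E m)) := by
        rw [hNe]; exact cEeven n m hmlt
      have hbnd : ∀ i ∈ E m, -(2*(n:ℤ)) ≤ i ∧ i ≤ 2*(n:ℤ) := by
        rcases Nat.eq_zero_or_pos m with h0 | h0
        · intro i hi; rw [h0, E_zero] at hi; simp at hi
        · exact E_bounds_odd n m h0 hmlt (ih m (by omega) h0)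
      have hsum : (∑ i ∈ E m, phi ^ i) = (m:ℝ) := by
        rcases Nat.eq_zero_or_pos m with h0 | h0
        · rw [h0, E_zero]; simp
        · exact (ih m (by omega) h0).2.1
      have hgap : ∀ i ∈ E m, i + 1 ∉ E m := by
        rcases Nat.eq_zero_or_pos m with h0 | h0
        · intro i hi; rw [h0, E_zero] at hi; simp at hi
        · exact (ih m (by omega) h0).1
      have hA : (2*(n:ℤ)+2) ∉ insert (-(2*(n:ℤ)+2)) (E m) := by
        simp only [Finset.mem_insert]
        push_neg
        exact ⟨by omega, fun h => by have := hbnd _ h; omega⟩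
      have hC : (-(2*(n:ℤ)+2)) ∉ E m := fun h => by have := hbnd _ h; omega
      refine ⟨?_, ?_, ?_⟩
      · rw [hrw]
        intro i hi hi1
        simp only [Finset.mem_insert] at hi hi1
        rcases hi with rfl | rfl | hi <;> rcases hi1 with h1 | h1 | h1
        all_goals try omega
        all_goals try (have := hbnd _ h1; omega)
        · have := hbnd _ hi; omega
        · have := hbnd _ hi; omega
        · exact hgap i hi h1
      · rw [hrw, Finset.sum_insert hA, Finset.sum_insert hC, hsum]
        have he := phi_lucas_even (n+1)
        rw [show ((2*(n+1) : ℕ) : ℤ) = 2*(n:ℤ)+2 by push_cast; ring] at he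
        rw [show 2*(n+1) = 2*n+2 by ring] at he
        rw [hNe]
        push_cast
        linarith
      · refine Or.inr (Or.inr (Or.inl ⟨n, by omega, by omega, ?_, ?_⟩))
        · rw [hrw]
          exact Finset.mem_insert_of_mem (Finset.mem_insert_self _ _)
        · intro i hi
          rw [hrw] at hi
          simp only [Finset.mem_insert] at hi
          rcases hi with rfl | rfl | hi
          · omega
          · omega
          · have := hbnd _ hi; omega
    · -- endpoint
      have hrw : E N = evensF (n+1) := by
        rw [hc, show 2*n+3 = 2*(n+1)+1 by ring]
        exact cEend (n+1)
      refine ⟨?_, ?_, ?_⟩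
      · rw [hrw]
        intro i hi hi1
        obtain ⟨a, ha, rfl⟩ := mem_evensF.1 hi
        obtain ⟨a', ha', he⟩ := mem_evensF.1 hi1
        omega
      · rw [hrw, sum_evensF (n+1), hc]
        rw [show 2*(n+1)+1 = 2*n+3 by ring]
      · refine Or.inr (Or.inr (Or.inl ⟨n, by omega, by omega, ?_, ?_⟩))
        · rw [hrw]
          exact mem_evensF.2 ⟨2*n+2, by omega, by push_cast; ring⟩
        · intro i hi
          rw [hrw] at hi
          have := evensF_bounds hi
          push_cast at this
          omega
    · -- odd interval
      set m := N - Lucas (2*n+3) with hmdef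
      have hm1 : 1 ≤ m := by omega
      have hmlt : m < Lucas (2*n+2) := by omega
      have hNe : N = Lucas (2*n+3) + m := by omega
      have hgm : Good m := ih m (by omega) hm1
      obtain ⟨hbE, hbmin, hbev, hb0⟩ := E_min_facts m hm1 hgm
      set b := (E m).min.untopD 0 with hbdef
      have hbnd := E_bounds_even n m hm1 hmlt hgm
      have hblo : -(2*(n:ℤ)+2) ≤ b := (hbnd b hbE).1
      have hgapm := hgm.1
      have hrw : E N = insert (2*(n:ℤ)+3) (insert (-(2*(n:ℤ)+4))
          ((E m).erase b ∪ tailF (n+1) b)) := by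
        rw [hNe]; exact cEodd n m hm1 hmlt
      have hEr : ∀ j ∈ (E m).erase b, b+2 ≤ j ∧ j ≤ 2*(n:ℤ)+1 := by
        intro j hj
        obtain ⟨hne, hjm⟩ := Finset.mem_erase.1 hj
        have h1 := hbmin j hjm
        have h2 := (hbnd j hjm).2
        rcases Int.lt_or_le (b+1) j with h | h
        · omega
        · have : j = b + 1 := by omega
          exfalso
          apply hgapm b hbE
          rw [← this]; exact hjm
      have hT : ∀ j ∈ tailF (n+1) b, -(2*(n:ℤ))-1 ≤ j ∧ j ≤ b-1 := by
        intro j hj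
        have := tailF_bounds (k := n+1) hbev (by push_cast; omega) hj
        push_cast at this
        omega
      have hdisj : Disjoint ((E m).erase b) (tailF (n+1) b) := by
        rw [Finset.disjoint_left]
        intro j hj hj'
        have := hEr j hj
        have := hT j hj'
        omega
      have hC : (-(2*(n:ℤ)+4)) ∉ (E m).erase b ∪ tailF (n+1) b := by
        simp only [Finset.mem_union]
        rintro (h | h)
        · have := hEr _ h; omega
        · have := hT _ h; omega
      have hA : (2*(n:ℤ)+3) ∉ insert (-(2*(n:ℤ)+4)) ((E m).erase b ∪ tailF (n+1) b) := by
        simp only [Finset.mem_insert, Finset.mem_union]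
        rintro (h | h | h)
        · omega
        · have := hEr _ h; omega
        · have := hT _ h; omega
      refine ⟨?_, ?_, ?_⟩
      · rw [hrw]
        intro i hi hi1
        simp only [Finset.mem_insert, Finset.mem_union] at hi hi1
        rcases hi with rfl | rfl | hi | hi <;>
          rcases hi1 with h1 | h1 | h1 | h1
        all_goals try (exact hgapm i (Finset.mem_of_mem_erase hi) (Finset.mem_of_mem_erase h1))
        all_goals try (exact gap_tailF hi h1)
        all_goals try (first
          | omega
          | (have u := hEr _ h1; omega)
          | (have u := hT _ h1; omega)
          | (have u := hEr _ hi; first | omega | (have v := hT _ h1; omega) | (have v := hEr _ h1; omega))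
          | (have u := hT _ hi; first | omega | (have v := hT _ h1; omega) | (have v := hEr _ h1; omega)))
      · rw [hrw, Finset.sum_insert hA, Finset.sum_insert hC, Finset.sum_union hdisj]
        rw [Finset.sum_erase_eq_sub hbE, hgm.2.1]
        rw [sum_tailF (k := n+1) hbev (by push_cast; omega)]
        have ho := phi_lucas_odd (n+1)
        rw [show ((2*(n+1)+1 : ℕ) : ℤ) = 2*(n:ℤ)+3 by push_cast; ring] at ho
        rw [show 2*(n+1)+1 = 2*n+3 by ring] at ho
        have hs := phi_step (-(2*(n:ℤ)+2))
        rw [show (-(2*(n:ℤ)+2)-1) = -(2*(n:ℤ)+3) by ring,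
            show (-(2*(n:ℤ)+2)-2) = -(2*(n:ℤ)+4) by ring] at hs
        rw [show (-(2*((n:ℕ)+1:ℕ):ℤ)) = -(2*(n:ℤ)+2) by push_cast; ring]
        rw [hNe]
        push_cast
        linarith
      · refine Or.inr (Or.inr (Or.inr ⟨n, by omega, by omega, ?_, ?_⟩))
        · rw [hrw]
          exact Finset.mem_insert_of_mem (Finset.mem_insert_self _ _)
        · intro i hi
          rw [hrw] at hi
          simp only [Finset.mem_insert, Finset.mem_union] at hi
          rcases hi with rfl | rfl | hi | hi
          · omega
          · omega
          · have := hEr _ hi; omega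
          · have := hT _ hi; omega
-- ===== xi and sw =====
def sw : ℕ → ℕ
  | 1 => 5 | 2 => 6 | 3 => 7 | 4 => 8 | 5 => 1 | 6 => 2 | 7 => 3 | 8 => 4 | _ => 0

def xi (N : ℕ) : ℕ :=
  if (0:ℤ) ∈ E N then (if (E N).card % 2 = 1 then 2 else 6)
  else if (1:ℤ) ∈ E N then (if (E N).card % 2 = 1 then 7 else 3)
  else if (-1:ℤ) ∈ E N then (if (E N).card % 2 = 1 then 4 else 8)
  else (if (E N).card % 2 = 1 then 5 else 1)

lemma xi_congr {A B : ℕ} (h0 : ((0:ℤ) ∈ E A) ↔ (0:ℤ) ∈ E B)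
    (h1 : ((1:ℤ) ∈ E A) ↔ (1:ℤ) ∈ E B) (hm1 : ((-1:ℤ) ∈ E A) ↔ (-1:ℤ) ∈ E B)
    (hc : (E A).card % 2 = (E B).card % 2) : xi A = xi B := by
  unfold xi
  simp only [h0, h1, hm1, hc]

lemma xi_flip {A B : ℕ} (h0 : ((0:ℤ) ∈ E A) ↔ (0:ℤ) ∈ E B)
    (h1 : ((1:ℤ) ∈ E A) ↔ (1:ℤ) ∈ E B) (hm1 : ((-1:ℤ) ∈ E A) ↔ (-1:ℤ) ∈ E B)
    (hc : (E A).card % 2 ≠ (E B).card % 2) : xi A = sw (xi B) := by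
  unfold xi
  rcases Nat.mod_two_eq_zero_or_one (E B).card with h | h
  · have hA : (E A).card % 2 = 1 := by omega
    simp only [h0, h1, hm1, hA, h]
    norm_num
    split_ifs <;> rfl
  · have hA : (E A).card % 2 = 0 := by omega
    simp only [h0, h1, hm1, hA, h]
    norm_num
    split_ifs <;> rfl

-- ===== even copy =====
lemma xiCopy (n m : ℕ) (hm : m < Lucas (2*n+1)) : xi (Lucas (2*n+2) + m) = xi m := by
  have hbnd : ∀ i ∈ E m, -(2*(n:ℤ)) ≤ i ∧ i ≤ 2*(n:ℤ) := by
    rcases Nat.eq_zero_or_pos m with h0 | h0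
    · intro i hi; rw [h0, E_zero] at hi; simp at hi
    · exact E_bounds_odd n m h0 hm (goodAll m h0)
  have hrw := cEeven n m hm
  have hC : (-(2*(n:ℤ)+2)) ∉ E m := fun h => by have := hbnd _ h; omega
  have hA : (2*(n:ℤ)+2) ∉ insert (-(2*(n:ℤ)+2)) (E m) := by
    simp only [Finset.mem_insert]
    push_neg
    exact ⟨by omega, fun h => by have := hbnd _ h; omega⟩
  have hcard : (E (Lucas (2*n+2) + m)).card = (E m).card + 2 := by
    rw [hrw, Finset.card_insert_of_notMem hA, Finset.card_insert_of_notMem hC]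
  refine xi_congr ?_ ?_ ?_ (by omega)
  all_goals
    rw [hrw]
    simp only [Finset.mem_insert]
    constructor
    · rintro (h | h | h) <;> first | omega | exact h
    · intro h; tauto

lemma xiEnd (n : ℕ) : xi (Lucas (2*n+1)) = 2 := by
  have h0 : (0:ℤ) ∈ evensF n := mem_evensF.2 ⟨n, by omega, by push_cast; ring⟩
  have hc : (evensF n).card % 2 = 1 := by rw [card_evensF]; omega
  unfold xi
  rw [cEend n]
  simp [h0, hc]

-- ===== odd context =====
lemma odd_ctx (n m : ℕ) (hm1 : 1 ≤ m) (hmlt : m < Lucas (2*n+2)) :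
    (E m).min.untopD 0 ∈ E m ∧ Even ((E m).min.untopD 0) ∧ (E m).min.untopD 0 ≤ 0 ∧
    -(2*(n:ℤ)+2) ≤ (E m).min.untopD 0 ∧
    (∀ j ∈ (E m).erase ((E m).min.untopD 0), (E m).min.untopD 0 + 2 ≤ j ∧ j ≤ 2*(n:ℤ)+1) ∧
    (∀ j ∈ tailF (n+1) ((E m).min.untopD 0), -(2*(n:ℤ))-1 ≤ j ∧ j ≤ (E m).min.untopD 0 - 1) ∧
    (E (Lucas (2*n+3) + m)).card = (E m).card + (((E m).min.untopD 0 + 2*(n:ℤ)+2)/2).toNat + 1 := by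
  have hgm : Good m := goodAll m hm1
  obtain ⟨hbE, hbmin, hbev, hb0⟩ := E_min_facts m hm1 hgm
  set b := (E m).min.untopD 0 with hbdef
  have hbnd := E_bounds_even n m hm1 hmlt hgm
  have hblo : -(2*(n:ℤ)+2) ≤ b := (hbnd b hbE).1
  have hgapm := hgm.1
  have hEr : ∀ j ∈ (E m).erase b, b+2 ≤ j ∧ j ≤ 2*(n:ℤ)+1 := by
    intro j hj
    obtain ⟨hne, hjm⟩ := Finset.mem_erase.1 hj
    have h1 := hbmin j hjm
    have h2 := (hbnd j hjm).2
    rcases Int.lt_or_le (b+1) j with h | h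
    · omega
    · have : j = b + 1 := by omega
      exfalso
      apply hgapm b hbE
      rw [← this]; exact hjm
  have hT : ∀ j ∈ tailF (n+1) b, -(2*(n:ℤ))-1 ≤ j ∧ j ≤ b-1 := by
    intro j hj
    have := tailF_bounds (k := n+1) hbev (by push_cast; omega) hj
    push_cast at this
    omega
  have hdisj : Disjoint ((E m).erase b) (tailF (n+1) b) := by
    rw [Finset.disjoint_left]
    intro j hj hj'
    have := hEr j hj
    have := hT j hj'
    omega
  have hC : (-(2*(n:ℤ)+4)) ∉ (E m).erase b ∪ tailF (n+1) b := by
    simp only [Finset.mem_union]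
    rintro (h | h)
    · have := hEr _ h; omega
    · have := hT _ h; omega
  have hA : (2*(n:ℤ)+3) ∉ insert (-(2*(n:ℤ)+4)) ((E m).erase b ∪ tailF (n+1) b) := by
    simp only [Finset.mem_insert, Finset.mem_union]
    rintro (h | h | h)
    · omega
    · have := hEr _ h; omega
    · have := hT _ h; omega
  have hrw := cEodd n m hm1 hmlt
  refine ⟨hbE, hbev, hb0, hblo, hEr, hT, ?_⟩
  rw [hrw, Finset.card_insert_of_notMem hA, Finset.card_insert_of_notMem hC,
      Finset.card_union_of_disjoint hdisj, Finset.card_erase_of_mem hbE, card_tailF]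
  have hcp : 1 ≤ (E m).card := Finset.card_pos.2 ⟨b, hbE⟩
  have : (b + 2*((n:ℕ)+1:ℕ):ℤ) = b + 2*(n:ℤ) + 2 := by push_cast; ring
  rw [this]
  omega

lemma memOdd (n m : ℕ) (hm1 : 1 ≤ m) (hmlt : m < Lucas (2*n+2)) :
    (((0:ℤ) ∈ E (Lucas (2*n+3) + m) ↔ ((0:ℤ) ∈ E m ∧ (E m).min.untopD 0 ≠ 0)) ∧
     ((1:ℤ) ∈ E (Lucas (2*n+3) + m) ↔ (1:ℤ) ∈ E m) ∧
     ((-1:ℤ) ∈ E (Lucas (2*n+3) + m) ↔ (((-1:ℤ) ∈ E m) ∨ (E m).min.untopD 0 = 0))) := by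
  obtain ⟨hbE, hbev, hb0, hblo, hEr, hT, hcard⟩ := odd_ctx n m hm1 hmlt
  set b := (E m).min.untopD 0 with hbdef
  have hrw := cEodd n m hm1 hmlt
  obtain ⟨c, hc⟩ := hbev
  have htail1 : ∀ j : ℤ, j ∈ tailF (n+1) b → j = -1 → b = 0 := by
    intro j hj hje
    obtain ⟨i, hi, he⟩ := mem_tailF.1 hj
    omega
  have htail2 : b = 0 → (-1:ℤ) ∈ tailF (n+1) b := by
    intro hb
    refine mem_tailF.2 ⟨0, ?_, by omega⟩
    have : ((b + 2*((n:ℕ)+1:ℕ):ℤ))/2 = (n:ℤ)+1 := by push_cast; omega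
    rw [this]
    omega
  refine ⟨?_, ?_, ?_⟩ <;> rw [hrw] <;>
    simp only [Finset.mem_insert, Finset.mem_union, Finset.mem_erase]
  · constructor
    · rintro (h | h | ⟨hne, h⟩ | h)
      · omega
      · omega
      · exact ⟨h, fun hb => hne (by omega)⟩
      · exfalso
        obtain ⟨i, hi, he⟩ := mem_tailF.1 h
        omega
    · rintro ⟨h, hne⟩
      exact Or.inr (Or.inr (Or.inl ⟨fun hb => hne (by omega), h⟩))
  · constructor
    · rintro (h | h | ⟨hne, h⟩ | h)
      · omega
      · omega
      · exact h
      · exfalso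
        have := hT _ h
        omega
    · intro h
      exact Or.inr (Or.inr (Or.inl ⟨by omega, h⟩))
  · constructor
    · rintro (h | h | ⟨hne, h⟩ | h)
      · omega
      · omega
      · exact Or.inl h
      · exact Or.inr (htail1 _ h rfl)
    · rintro (h | h)
      · refine Or.inr (Or.inr (Or.inl ⟨by omega, h⟩))
      · exact Or.inr (Or.inr (Or.inr (htail2 h)))
-- ===== frame localization =====
lemma frame_even_interval (k m : ℕ) (h1 : Lucas (2*k+2) ≤ m) (h2 : m ≤ Lucas (2*k+3)) :
    Frame (E m) (-(2*(k:ℤ)+2)) (2*(k:ℤ)+2) := by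
  have hm1 : 1 ≤ m := le_trans (lucas_pos _) h1
  have h3 : 3 ≤ Lucas (2*k+2) := lucas_two_le _ (by omega)
  rcases (goodAll m hm1).2.2 with ⟨e1, hE⟩ | ⟨e2, hE⟩ | ⟨j, hj1, hj2, hf⟩ | ⟨j, hj1, hj2, hf⟩
  · omega
  · omega
  · have hjk : j = k := by
      by_contra hne
      rcases Nat.lt_or_ge j k with h | h
      · have := lucas_mono_le (2*j+3) (2*k+1) (by omega) (by omega)
        have := lucas_strictMono (2*k+1) (2*k+2) (by omega) (by omega)
        omega
      · have hkj : k < j := by omega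
        have := lucas_mono_le (2*k+3) (2*j+1) (by omega) (by omega)
        have := lucas_strictMono (2*j+1) (2*j+2) (by omega) (by omega)
        omega
    rw [hjk] at hf
    exact hf
  · exfalso
    rcases Nat.lt_or_ge j k with h | h
    · have := lucas_mono_le (2*j+4) (2*k+2) (by omega) (by omega)
      omega
    · have := lucas_mono_le (2*k+3) (2*j+3) (by omega) (by omega)
      omega

lemma frame_odd_interval (k m : ℕ) (h1 : Lucas (2*k+3) < m) (h2 : m < Lucas (2*k+4)) :
    Frame (E m) (-(2*(k:ℤ)+4)) (2*(k:ℤ)+3) := by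
  have h3 : 3 ≤ Lucas (2*k+2) := lucas_two_le _ (by omega)
  have h4 : Lucas (2*k+2) ≤ Lucas (2*k+3) := lucas_mono_le _ _ (by omega) (by omega)
  have hm1 : 1 ≤ m := by omega
  rcases (goodAll m hm1).2.2 with ⟨e1, hE⟩ | ⟨e2, hE⟩ | ⟨j, hj1, hj2, hf⟩ | ⟨j, hj1, hj2, hf⟩
  · omega
  · omega
  · exfalso
    rcases Nat.lt_or_ge j k with h | h
    · have := lucas_mono_le (2*j+3) (2*k+3) (by omega) (by omega)
      omega
    · rcases Nat.eq_or_lt_of_le h with he | h'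
      · subst he; omega
      · have := lucas_mono_le (2*k+4) (2*j+2) (by omega) (by omega)
        omega
  · have hjk : j = k := by
      by_contra hne
      rcases Nat.lt_or_ge j k with h | h
      · have := lucas_mono_le (2*j+4) (2*k+3) (by omega) (by omega)
        omega
      · have hkj : k < j := by omega
        have := lucas_mono_le (2*k+4) (2*j+3) (by omega) (by omega)
        omega
    rw [hjk] at hf
    exact hf

-- ===== the three substitution lemmas =====
lemma xi_s1 (n m : ℕ) (hm1 : 1 ≤ m) (hmlt : m < Lucas (2*n+2)) :
    xi (Lucas (2*n+5) + m) = sw (xi (Lucas (2*n+3) + m)) := by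
  have hmlt' : m < Lucas (2*n+4) :=
    lt_of_lt_of_le hmlt (lucas_mono_le _ _ (by omega) (by omega))
  obtain ⟨hbE, hbev, hb0, hblo, _, _, hcard1⟩ := odd_ctx n m hm1 hmlt
  obtain ⟨_, _, _, _, _, _, hcard2⟩ := odd_ctx (n+1) m hm1 hmlt'
  obtain ⟨m01, m11, mm11⟩ := memOdd n m hm1 hmlt
  obtain ⟨m02, m12, mm12⟩ := memOdd (n+1) m hm1 hmlt'
  rw [show 2*(n+1)+3 = 2*n+5 by ring] at hcard2 m02 m12 mm12
  obtain ⟨c, hc⟩ := hbev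
  refine xi_flip ?_ ?_ ?_ ?_
  · rw [m02, m01]
  · rw [m12, m11]
  · rw [mm12, mm11]
  · rw [hcard1, hcard2]
    push_cast
    omega

lemma xi_s2 (k m : ℕ) (h1 : Lucas (2*k+2) ≤ m) (h2 : m ≤ Lucas (2*k+3)) :
    xi (Lucas (2*k+5) + m) = xi m := by
  have hf := frame_even_interval k m h1 h2
  have hb := frame_min hf
  have hm1 : 1 ≤ m := le_trans (lucas_pos _) h1
  have hmlt : m < Lucas (2*(k+1)+2) := by
    have : Lucas (2*k+3) < Lucas (2*k+4) := lucas_strictMono _ _ (by omega) (by omega)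
    rw [show 2*(k+1)+2 = 2*k+4 by ring]
    omega
  obtain ⟨_, _, _, _, _, _, hcard⟩ := odd_ctx (k+1) m hm1 hmlt
  obtain ⟨m0, m1, mm1⟩ := memOdd (k+1) m hm1 hmlt
  rw [show 2*(k+1)+3 = 2*k+5 by ring] at hcard m0 m1 mm1
  rw [hb] at hcard m0 mm1
  refine xi_congr ?_ ?_ ?_ ?_
  · rw [m0]
    constructor
    · rintro ⟨h, _⟩; exact h
    · intro h; exact ⟨h, by omega⟩
  · rw [m1]
  · rw [mm1]
    constructor
    · rintro (h | h)
      · exact h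
      · exfalso; omega
    · intro h; exact Or.inl h
  · rw [hcard]
    have : ((-(2*(k:ℤ)+2) + 2*((k:ℕ)+1:ℕ)+2)/2) = 1 := by push_cast; omega
    rw [this]
    omega

lemma xi_s3 (k m : ℕ) (h1 : Lucas (2*k+3) < m) (h2 : m < Lucas (2*k+4)) :
    xi (Lucas (2*k+5) + m) = sw (xi m) := by
  have hf := frame_odd_interval k m h1 h2
  have hb := frame_min hf
  have hm1 : 1 ≤ m := by have := lucas_pos (2*k+3); omega
  have hmlt : m < Lucas (2*(k+1)+2) := by rw [show 2*(k+1)+2 = 2*k+4 by ring]; omega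
  obtain ⟨_, _, _, _, _, _, hcard⟩ := odd_ctx (k+1) m hm1 hmlt
  obtain ⟨m0, m1, mm1⟩ := memOdd (k+1) m hm1 hmlt
  rw [show 2*(k+1)+3 = 2*k+5 by ring] at hcard m0 m1 mm1
  rw [hb] at hcard m0 mm1
  refine xi_flip ?_ ?_ ?_ ?_
  · rw [m0]
    constructor
    · rintro ⟨h, _⟩; exact h
    · intro h; exact ⟨h, by omega⟩
  · rw [m1]
  · rw [mm1]
    constructor
    · rintro (h | h)
      · exact h
      · exfalso; omega
    · intro h; exact Or.inl h
  · rw [hcard]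
    have : ((-(2*(k:ℤ)+4) + 2*((k:ℕ)+1:ℕ)+2)/2) = 0 := by push_cast; omega
    rw [this]
    omega
-- ===== words P and O =====
def POaux : ℕ → (List ℕ × List ℕ) × (List ℕ × List ℕ)
  | 0 => (([], [3]), ([1], [4,7]))
  | (n+1) =>
    let x := POaux n
    (x.2, (x.2.1 ++ [2] ++ x.1.2 ++ x.2.1, (x.2.2.map sw) ++ (x.2.1 ++ [2]) ++ (x.2.2.map sw)))

def Pw (n : ℕ) : List ℕ := (POaux n).1.1
def Ow (n : ℕ) : List ℕ := (POaux n).1.2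

lemma Pw_succ (k : ℕ) : Pw (k+2) = Pw (k+1) ++ [2] ++ Ow k ++ Pw (k+1) := rfl
lemma Ow_succ (k : ℕ) : Ow (k+2) = (Ow (k+1)).map sw ++ (Pw (k+1) ++ [2]) ++ (Ow (k+1)).map sw := rfl

lemma tau_sw (a : ℕ) : tau (sw a) = (tau a).map sw := by
  match a with
  | 0 => rfl
  | 1 => rfl
  | 2 => rfl
  | 3 => rfl
  | 4 => rfl
  | 5 => rfl
  | 6 => rfl
  | 7 => rfl
  | 8 => rfl
  | (n+9) => rfl

lemma tauWord_append (u v : List ℕ) : tauWord (u ++ v) = tauWord u ++ tauWord v := by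
  simp [tauWord]

lemma tauWord_map_sw (w : List ℕ) : tauWord (w.map sw) = (tauWord w).map sw := by
  induction w with
  | nil => rfl
  | cons a t ih =>
    show tauWord (sw a :: t.map sw) = _
    have h1 : tauWord (sw a :: t.map sw) = tau (sw a) ++ tauWord (t.map sw) := by
      simp [tauWord]
    have h2 : tauWord (a :: t) = tau a ++ tauWord t := by simp [tauWord]
    rw [h1, h2, ih, tau_sw, List.map_append]

lemma halfB : ∀ k : ℕ,
    (tauWord (Pw (k+1) ++ [2]) = Pw (k+2) ++ [2]) ∧
    (tauWord (Ow (k+1)) = Ow (k+2)) ∧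
    (tauWord (Ow k) = Ow (k+1)) := by
  intro k
  induction k with
  | zero =>
    refine ⟨?_, ?_, ?_⟩ <;> rfl
  | succ k ih =>
    obtain ⟨ih1, ih2, ih3⟩ := ih
    refine ⟨?_, ?_, ih2⟩
    · rw [Pw_succ]
      have : Pw (k+1) ++ [2] ++ Ow k ++ Pw (k+1) ++ [2]
          = (Pw (k+1) ++ [2]) ++ (Ow k ++ (Pw (k+1) ++ [2])) := by
        simp [List.append_assoc]
      rw [this, tauWord_append (Pw (k+1) ++ [2]) (Ow k ++ (Pw (k+1) ++ [2])),
          tauWord_append (Ow k) (Pw (k+1) ++ [2]), ih1, ih3, Pw_succ (k+1)]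
      simp [List.append_assoc]
    · rw [Ow_succ, tauWord_append ((Ow (k+1)).map sw ++ (Pw (k+1) ++ [2])) ((Ow (k+1)).map sw),
          tauWord_append ((Ow (k+1)).map sw) (Pw (k+1) ++ [2]),
          tauWord_map_sw, ih2, ih1, Ow_succ (k+1)]

lemma tau_iter (n : ℕ) (hn : 1 ≤ n) : tauWord^[n] [1] = Pw n ++ [2] := by
  induction n with
  | zero => omega
  | succ n ih =>
    rcases Nat.eq_zero_or_pos n with h0 | h0
    · subst h0; rfl
    · rw [Function.iterate_succ_apply', ih h0]
      obtain ⟨k, rfl⟩ : ∃ k, n = k + 1 := ⟨n - 1, by omega⟩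
      exact (halfB k).1
-- ===== arithmetic words =====
def word (a len : ℕ) : List ℕ := (List.range len).map (fun i => xi (a + i))

lemma word_append (a l1 l2 : ℕ) : word a (l1 + l2) = word a l1 ++ word (a + l1) l2 := by
  unfold word
  rw [List.range_add (n := l1) (m := l2), List.map_append, List.map_map]
  congr 1
  apply List.map_congr_left
  intro x _
  simp [Function.comp, Nat.add_assoc]

lemma word_congr {a b len : ℕ} (h : ∀ i, i < len → xi (a + i) = xi (b + i)) :
    word a len = word b len := by
  unfold word
  apply List.map_congr_left
  intro x hx
  exact h x (List.mem_range.1 hx)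

lemma word_sw {a b len : ℕ} (h : ∀ i, i < len → xi (a + i) = sw (xi (b + i))) :
    word a len = (word b len).map sw := by
  unfold word
  rw [List.map_map]
  apply List.map_congr_left
  intro x hx
  exact h x (List.mem_range.1 hx)

lemma word_one (a : ℕ) : word a 1 = [xi a] := rfl

lemma wordJ : ∀ n : ℕ,
    (word 0 (Lucas (2*n+1)) = Pw (n+1)) ∧
    (word (Lucas (2*n+1) + 1) (Lucas (2*n) - 1) = Ow n) := by
  intro n
  induction n using Nat.strong_induction_on with
  | _ n ih =>
  cases n with
  | zero =>
    constructor
    · show word 0 1 = [1]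
      rw [word_one]
      norm_num [show xi 0 = 1 by decide]
    · show word 2 1 = [3]
      rw [word_one]
      norm_num [show xi 2 = 3 by decide]
  | succ n =>
    have hL1 : Lucas (2*n+3) = Lucas (2*n+2) + Lucas (2*n+1) := lucas_add _
    have hL2 : Lucas (2*n+2) = Lucas (2*n+1) + Lucas (2*n) := lucas_add _
    have hp0 := lucas_pos (2*n)
    have hp1 := lucas_pos (2*n+1)
    have hp2 := lucas_pos (2*n+2)
    have ihn := ih n (by omega)
    constructor
    · rw [show 2*(n+1)+1 = 2*n+3 by ring]
      have hsplit : Lucas (2*n+3) = Lucas (2*n+1) + 1 + (Lucas (2*n) - 1) + Lucas (2*n+1) := by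
        omega
      rw [hsplit, word_append, word_append, word_append]
      simp only [Nat.zero_add]
      rw [ihn.1, word_one, xiEnd n]
      rw [show Lucas (2*n+1) + 1 + (Lucas (2*n) - 1) = Lucas (2*n+2) by omega]
      rw [ihn.2]
      have hcopy : word (Lucas (2*n+2)) (Lucas (2*n+1)) = word 0 (Lucas (2*n+1)) := by
        apply word_congr
        intro i hilt
        rw [show (0:ℕ) + i = i by omega]
        exact xiCopy n i hilt
      rw [hcopy, ihn.1, Pw_succ n]
    · rw [show 2*(n+1)+1 = 2*n+3 by ring, show 2*(n+1) = 2*n+2 by ring]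
      cases n with
      | zero =>
        show word 5 2 = Ow 1
        have h52 : word 5 2 = [xi 5, xi 6] := rfl
        rw [h52, show xi 5 = 4 by decide, show xi 6 = 7 by decide]
        rfl
      | succ k =>
        have hM1 : Lucas (2*k+3) = Lucas (2*k+2) + Lucas (2*k+1) := lucas_add _
        have hM2 : Lucas (2*k+4) = Lucas (2*k+3) + Lucas (2*k+2) := lucas_add _
        have hq1 := lucas_pos (2*k+1)
        have hq2 := lucas_pos (2*k+2)
        have hq3 := lucas_pos (2*k+3)
        have ihk := ih k (by omega)
        have ihk1 := ih (k+1) (by omega)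
        rw [show 2*(k+1)+3 = 2*k+5 by ring, show 2*(k+1)+2 = 2*k+4 by ring]
        have hsplit : Lucas (2*k+4) - 1 =
            (Lucas (2*k+2) - 1) + (Lucas (2*k+1) + 1) + (Lucas (2*k+2) - 1) := by
          omega
        rw [hsplit, word_append, word_append]
        have hOw : word (Lucas (2*(k+1)+1) + 1) (Lucas (2*(k+1)) - 1) = Ow (k+1) := ihk1.2
        rw [show 2*(k+1)+1 = 2*k+3 by ring, show 2*(k+1) = 2*k+2 by ring] at hOw
        have hc1 : word (Lucas (2*k+5) + 1) (Lucas (2*k+2) - 1)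
            = (word (Lucas (2*k+3) + 1) (Lucas (2*k+2) - 1)).map sw := by
          apply word_sw
          intro i hilt
          rw [show Lucas (2*k+5) + 1 + i = Lucas (2*k+5) + (1+i) by omega,
              show Lucas (2*k+3) + 1 + i = Lucas (2*k+3) + (1+i) by omega]
          exact xi_s1 k (1+i) (by omega) (by omega)
        have hc2 : word (Lucas (2*k+5) + 1 + (Lucas (2*k+2) - 1)) (Lucas (2*k+1) + 1)
            = word (Lucas (2*k+2)) (Lucas (2*k+1) + 1) := by
          rw [show Lucas (2*k+5) + 1 + (Lucas (2*k+2) - 1)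
              = Lucas (2*k+5) + Lucas (2*k+2) by omega]
          apply word_congr
          intro i hilt
          rw [show Lucas (2*k+5) + Lucas (2*k+2) + i
              = Lucas (2*k+5) + (Lucas (2*k+2) + i) by omega]
          exact xi_s2 k (Lucas (2*k+2) + i) (by omega) (by omega)
        have hc2' : word (Lucas (2*k+2)) (Lucas (2*k+1) + 1) = Pw (k+1) ++ [2] := by
          rw [word_append]
          have hcopy : word (Lucas (2*k+2)) (Lucas (2*k+1)) = word 0 (Lucas (2*k+1)) := by
            apply word_congr
            intro i hilt
            rw [show (0:ℕ) + i = i by omega]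
            exact xiCopy k i hilt
          rw [hcopy, ihk.1, word_one,
              show Lucas (2*k+2) + Lucas (2*k+1) = Lucas (2*k+3) by omega]
          have hend := xiEnd (k+1)
          rw [show 2*(k+1)+1 = 2*k+3 by ring] at hend
          rw [hend]
        have hc3 : word (Lucas (2*k+5) + 1 + ((Lucas (2*k+2) - 1) + (Lucas (2*k+1) + 1)))
              (Lucas (2*k+2) - 1)
            = (word (Lucas (2*k+3) + 1) (Lucas (2*k+2) - 1)).map sw := by
          rw [show Lucas (2*k+5) + 1 + ((Lucas (2*k+2) - 1) + (Lucas (2*k+1) + 1))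
              = Lucas (2*k+5) + Lucas (2*k+3) + 1 by omega]
          apply word_sw
          intro i hilt
          rw [show Lucas (2*k+5) + Lucas (2*k+3) + 1 + i
              = Lucas (2*k+5) + (Lucas (2*k+3) + 1 + i) by omega]
          exact xi_s3 k (Lucas (2*k+3) + 1 + i) (by omega) (by omega)
        rw [hc1, hc2, hc2', hc3, hOw, Ow_succ k]

-- the word over the closed even interval
lemma wordEvenInterval (k : ℕ) :
    word (Lucas (2*k+2)) (Lucas (2*k+1) + 1) = Pw (k+1) ++ [2] := by
  rw [word_append]
  have hcopy : word (Lucas (2*k+2)) (Lucas (2*k+1)) = word 0 (Lucas (2*k+1)) := by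
    apply word_congr
    intro i hilt
    rw [show (0:ℕ) + i = i by omega]
    exact xiCopy k i hilt
  rw [hcopy, (wordJ k).1, word_one,
      show Lucas (2*k+2) + Lucas (2*k+1) = Lucas (2*k+3) from (lucas_add _).symm]
  have hend := xiEnd (k+1)
  rw [show 2*(k+1)+1 = 2*k+3 by ring] at hend
  rw [hend]
-- ===== final glue =====
lemma digitSum_indicator (N : ℕ) :
    digitSum (fun i => if i ∈ E N then 1 else 0) = (E N).card := by
  unfold digitSum
  have h : HasSum (fun i : ℤ => if i ∈ E N then 1 else 0)
      (∑ i ∈ E N, (if i ∈ E N then 1 else 0 : ℕ)) :=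
    hasSum_sum_of_ne_finset_zero (by intro b hb; simp [hb])
  rw [h.tsum_eq, Finset.sum_congr rfl (fun i hi => if_pos hi), Finset.sum_const,
      smul_eq_mul, mul_one]

lemma isBasePhi_E (N : ℕ) (h1 : 1 ≤ N) :
    IsBasePhi N (fun i => if i ∈ E N then 1 else 0) := by
  obtain ⟨hgap, hsum, -⟩ := goodAll N h1
  refine ⟨?_, ?_, ?_, ?_⟩
  · apply Set.Finite.subset (E N).finite_toSet
    intro i hi
    simp only [Set.mem_setOf_eq] at hi
    simp only [Finset.mem_coe]
    by_contra hc
    rw [if_neg hc] at hi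
    exact hi rfl
  · intro i
    show (if i ∈ E N then 1 else 0) ≤ 1
    split_ifs <;> omega
  · intro i
    by_cases hA : i ∈ E N
    · by_cases hB : i + 1 ∈ E N
      · exact absurd hB (hgap i hA)
      · simp [hB]
    · simp [hA]
  · have h : HasSum (fun i : ℤ => ((if i ∈ E N then 1 else 0 : ℕ) : ℝ) * phi ^ i)
        (∑ i ∈ E N, ((if i ∈ E N then 1 else 0 : ℕ) : ℝ) * phi ^ i) :=
      hasSum_sum_of_ne_finset_zero (by intro b hb; simp [hb])
    rw [h.tsum_eq, ← hsum]
    apply Finset.sum_congr rfl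
    intro i hi
    rw [if_pos hi]
    simp

lemma T_val (T : ℕ → ℕ)
    (hT : ∀ (N : ℕ) (d : ℤ → ℕ), IsBasePhi N d → T N = digitSum d % 2)
    (N : ℕ) (h1 : 1 ≤ N) : T N = (E N).card % 2 := by
  rw [hT N _ (isBasePhi_E N h1), digitSum_indicator]

lemma lam_xi (N : ℕ) : lam (xi N) = (E N).card % 2 := by
  unfold xi
  split_ifs <;> simp only [lam] <;> omega

theorem Tword_even_eq_tau' (T : ℕ → ℕ)
    (hT : ∀ (N : ℕ) (d : ℤ → ℕ), IsBasePhi N d → T N = digitSum d % 2)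
    (n : ℕ) (hn : 1 ≤ n) :
    Tword T (Lucas (2 * n)) (Lucas (2 * n + 1)) = (tauWord^[n] [1]).map lam := by
  obtain ⟨k, rfl⟩ : ∃ k, n = k + 1 := ⟨n - 1, by omega⟩
  rw [show (2*(k+1)+1) = 2*k+3 by ring, show 2*(k+1) = 2*k+2 by ring]
  unfold Tword
  have hlen : Lucas (2*k+3) + 1 - Lucas (2*k+2) = Lucas (2*k+1) + 1 := by
    have hx : Lucas (2*k+3) = Lucas (2*k+2) + Lucas (2*k+1) := lucas_add (2*k+1)
    have := lucas_pos (2*k+1)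
    omega
  rw [hlen, tau_iter (k+1) (by omega), ← wordEvenInterval k]
  unfold word
  rw [List.map_map]
  apply List.map_congr_left
  intro j hj
  show T (Lucas (2*k+2) + j) = lam (xi (Lucas (2*k+2) + j))
  rw [T_val T hT _ (by have := lucas_two_le (2*k+2) (by omega); omega), lam_xi]

/-- For `n ≥ 1`, the word `T(L (2n)) T(L (2n) + 1) … T(L (2n+1))` (i.e. `T(Λ_{2n})`)
is the letter-by-letter image under `λ` of `τ^n(1)`. -/
theorem Tword_even_eq_tau (T : ℕ → ℕ)
    (hT : ∀ (N : ℕ) (d : ℤ → ℕ), IsBasePhi N d → T N = digitSum d % 2)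
    (n : ℕ) (hn : 1 ≤ n) :
    Tword T (Lucas (2 * n)) (Lucas (2 * n + 1)) = (tauWord^[n] [1]).map lam := by
  exact Tword_even_eq_tau' T hT n hn
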